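/- Let (Y, d^×) be a pseudometric space equipped with an ℝ-action (r,x) ↦ r⁺x such that every orbit map r ↦ r⁺x is non-expanding (d^×(r₁⁺x, r₂⁺x) ≤ |r₁-r₂|) and the action satisfies (r+s)⁺x = r⁺(s⁺x). Define d_*(x,y) := ∫_{-∞}^{∞} d^×(r⁺x, r⁺y)·(e^{-|r|}/2) dr. Then: (a) d_* is a well-defined pseudometric with d_*(x,y) ≤ d^×(x,y) + 2 and d_*(x,y) ≥ d^×(x,y) - 2; (b) for each r ∈ ℝ, the map x ↦ r⁺x is bi-Lipschitz with respect to d_* with constant e^{|r|}. -/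

import Mathlib

open MeasureTheory

/-- The averaged pseudometric d_*(x,y) := ∫ d^×(r⁺x, r⁺y)·(e^{-|r|}/2) dr,
where the ℝ-action is given by T. -/
noncomputable def dstar {Y : Type*} [PseudoMetricSpace Y]
    (T : ℝ → Y → Y) (x y : Y) : ℝ :=
  ∫ r : ℝ, dist (T r x) (T r y) * (Real.exp (-|r|) / 2)

/-!
The weight `e^{-|r|}/2` is a probability density with first absolute moment `1`. For fixed
`x, y` the function `r ↦ d^×(r⁺x, r⁺y)` is `2`-Lipschitz with value `d^×(x, y)` at `0`, so
its average differs from `d^×(x, y)` by at most `2`; the pseudometric axioms pass through the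
integral pointwise. Acting by `s` translates the integrand by `s`, and translation changes the
weight by a factor of at most `e^{|s|}` because `|r + s| ≤ |r| + |s|`.
-/

open Set Real
open scoped NNReal

theorem integrable_comp_abs {E : Type*} [NormedAddCommGroup E] {f : ℝ → E}
    (hf : IntegrableOn f (Ioi 0)) : Integrable fun x : ℝ => f |x| := by
  have hIoi : IntegrableOn (fun x : ℝ => f |x|) (Ioi 0) :=
    hf.congr_fun (fun x hx => by rw [abs_of_pos hx]) measurableSet_Ioi
  have hIio : IntegrableOn (fun x : ℝ => f |x|) (Iio 0) := by
    simpa using hIoi.comp_neg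
  rw [← integrableOn_univ, ← Iio_union_Ici]
  exact hIio.union (Iff.mpr integrableOn_Ici_iff_integrableOn_Ioi hIoi)

theorem integrable_exp_neg_abs : Integrable fun r : ℝ => exp (-|r|) :=
  integrable_comp_abs (integrableOn_exp_neg_Ioi 0)

theorem integral_exp_neg_abs : ∫ r : ℝ, exp (-|r|) = 2 := by
  rw [integral_comp_abs (f := fun t => exp (-t)), integral_exp_neg_Ioi_zero, mul_one]

theorem integrable_abs_mul_exp_neg_abs : Integrable fun r : ℝ => |r| * exp (-|r|) :=
  integrable_comp_abs <| by
    simpa using integrableOn_rpow_mul_exp_neg_rpow (s := 1) (p := 1) (by norm_num) one_pos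

theorem integral_abs_mul_exp_neg_abs : ∫ r : ℝ, |r| * exp (-|r|) = 2 := by
  have h := integral_rpow_mul_exp_neg_mul_Ioi (a := 2) (r := 1) two_pos one_pos
  norm_num [Gamma_two] at h
  rw [integral_comp_abs (f := fun t => t * exp (-t)), h, mul_one]

theorem exp_neg_abs_le_exp_abs_mul_exp_neg_abs_add (r s : ℝ) :
    exp (-|r|) ≤ exp |s| * exp (-|r + s|) := by
  rw [← exp_add, exp_le_exp]
  linarith [abs_add_le r s]

namespace LipschitzWith

variable {g : ℝ → ℝ} {L : ℝ≥0}

theorem abs_sub_apply_zero_le (hg : LipschitzWith L g) (r : ℝ) : |g r - g 0| ≤ L * |r| := by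
  simpa [Real.dist_eq] using hg.dist_le_mul r 0

theorem integrable_mul_exp_neg_abs (hg : LipschitzWith L g) :
    Integrable fun r => g r * (exp (-|r|) / 2) := by
  refine ((integrable_exp_neg_abs.const_mul (|g 0| / 2)).add
    (integrable_abs_mul_exp_neg_abs.const_mul (L / 2))).mono'
    (hg.continuous.mul (by fun_prop)).aestronglyMeasurable (ae_of_all _ fun r => ?_)
  have hgr : |g r| ≤ |g 0| + L * |r| := by
    linarith [abs_sub_abs_le_abs_sub (g r) (g 0), hg.abs_sub_apply_zero_le r]
  rw [norm_mul, norm_div, norm_of_nonneg (exp_pos _).le, Real.norm_eq_abs, RCLike.norm_ofNat,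
    Pi.add_apply]
  calc |g r| * (exp (-|r|) / 2) ≤ (|g 0| + L * |r|) * (exp (-|r|) / 2) := by gcongr
    _ = _ := by ring

theorem abs_integral_mul_exp_neg_abs_sub_le (hg : LipschitzWith L g) :
    |(∫ r, g r * (exp (-|r|) / 2)) - g 0| ≤ L := by
  have hmass : ∫ r : ℝ, g 0 * (exp (-|r|) / 2) = g 0 := by
    rw [integral_const_mul, integral_div, integral_exp_neg_abs]; ring
  calc |(∫ r, g r * (exp (-|r|) / 2)) - g 0|
      = ‖∫ r, (g r - g 0) * (exp (-|r|) / 2)‖ := by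
        simp_rw [sub_mul]
        rw [integral_sub hg.integrable_mul_exp_neg_abs
          ((integrable_exp_neg_abs.div_const 2).const_mul _), hmass, Real.norm_eq_abs]
    _ ≤ ∫ r, L / 2 * (|r| * exp (-|r|)) := by
        refine norm_integral_le_of_norm_le (integrable_abs_mul_exp_neg_abs.const_mul _)
          (ae_of_all _ fun r => ?_)
        rw [norm_mul, Real.norm_eq_abs, norm_div, norm_of_nonneg (exp_pos _).le,
          RCLike.norm_ofNat]
        calc |g r - g 0| * (exp (-|r|) / 2) ≤ L * |r| * (exp (-|r|) / 2) := by
              gcongr; exact hg.abs_sub_apply_zero_le r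
          _ = _ := by ring
    _ = L := by rw [integral_const_mul, integral_abs_mul_exp_neg_abs]; ring

end LipschitzWith

theorem integral_comp_add_right_mul_exp_neg_abs_le {g : ℝ → ℝ} (hg0 : ∀ r, 0 ≤ g r)
    (hg : Integrable fun r => g r * (exp (-|r|) / 2)) (s : ℝ) :
    ∫ r, g (r + s) * (exp (-|r|) / 2) ≤ exp |s| * ∫ r, g r * (exp (-|r|) / 2) :=
  calc ∫ r, g (r + s) * (exp (-|r|) / 2)
      ≤ ∫ r, exp |s| * (g (r + s) * (exp (-|r + s|) / 2)) := by
        refine integral_mono_of_nonneg (ae_of_all _ fun r => ?_)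
          ((hg.comp_add_right s).const_mul _) (ae_of_all _ fun r => ?_)
        · have := hg0 (r + s); positivity
        · calc g (r + s) * (exp (-|r|) / 2)
              ≤ g (r + s) * (exp |s| * exp (-|r + s|) / 2) := by
                gcongr
                exacts [hg0 _, exp_neg_abs_le_exp_abs_mul_exp_neg_abs_add r s]
            _ = exp |s| * (g (r + s) * (exp (-|r + s|) / 2)) := by ring
    _ = exp |s| * ∫ r, g r * (exp (-|r|) / 2) := by
        rw [integral_const_mul, integral_add_right_eq_self (fun r => g r * (exp (-|r|) / 2)) s]

section Flow

variable {Y : Type*} [PseudoMetricSpace Y] {T : ℝ → Y → Y}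

theorem lipschitzWith_dist_flow
    (horb : ∀ (x : Y) (r₁ r₂ : ℝ), dist (T r₁ x) (T r₂ x) ≤ |r₁ - r₂|) (x y : Y) :
    LipschitzWith 2 fun r => dist (T r x) (T r y) :=
  LipschitzWith.of_dist_le_mul fun r₁ r₂ =>
    calc dist (dist (T r₁ x) (T r₁ y)) (dist (T r₂ x) (T r₂ y))
        ≤ dist (T r₁ x) (T r₂ x) + dist (T r₁ y) (T r₂ y) := dist_dist_dist_le _ _ _ _
      _ ≤ 2 * dist r₁ r₂ := by
        rw [Real.dist_eq]; linarith [horb x r₁ r₂, horb y r₁ r₂]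

theorem integrable_dist_flow_mul_exp_neg_abs
    (horb : ∀ (x : Y) (r₁ r₂ : ℝ), dist (T r₁ x) (T r₂ x) ≤ |r₁ - r₂|) (x y : Y) :
    Integrable fun r => dist (T r x) (T r y) * (exp (-|r|) / 2) :=
  (lipschitzWith_dist_flow horb x y).integrable_mul_exp_neg_abs

theorem dstar_comm (x y : Y) : dstar T x y = dstar T y x := by
  simp only [dstar, dist_comm]

theorem dstar_self (x : Y) : dstar T x x = 0 := by
  simp [dstar]

theorem dstar_triangle
    (horb : ∀ (x : Y) (r₁ r₂ : ℝ), dist (T r₁ x) (T r₂ x) ≤ |r₁ - r₂|) (x y z : Y) :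
    dstar T x z ≤ dstar T x y + dstar T y z := by
  rw [dstar, dstar, dstar, ← integral_add (integrable_dist_flow_mul_exp_neg_abs horb x y)
    (integrable_dist_flow_mul_exp_neg_abs horb y z)]
  refine integral_mono (integrable_dist_flow_mul_exp_neg_abs horb x z)
    ((integrable_dist_flow_mul_exp_neg_abs horb x y).add
      (integrable_dist_flow_mul_exp_neg_abs horb y z)) fun r => ?_
  rw [← add_mul]
  gcongr
  exact dist_triangle _ _ _

theorem abs_dstar_sub_dist_le (h0 : ∀ x, T 0 x = x)
    (horb : ∀ (x : Y) (r₁ r₂ : ℝ), dist (T r₁ x) (T r₂ x) ≤ |r₁ - r₂|) (x y : Y) :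
    |dstar T x y - dist x y| ≤ 2 := by
  simpa [dstar, h0] using (lipschitzWith_dist_flow horb x y).abs_integral_mul_exp_neg_abs_sub_le

theorem dstar_map_le_exp_abs_mul
    (hadd : ∀ (r s : ℝ) (x : Y), T (r + s) x = T r (T s x))
    (horb : ∀ (x : Y) (r₁ r₂ : ℝ), dist (T r₁ x) (T r₂ x) ≤ |r₁ - r₂|) (s : ℝ) (x y : Y) :
    dstar T (T s x) (T s y) ≤ exp |s| * dstar T x y := by
  simpa only [dstar, hadd] using integral_comp_add_right_mul_exp_neg_abs_le
    (fun _ => dist_nonneg) (integrable_dist_flow_mul_exp_neg_abs horb x y) s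

theorem dstar_le_exp_abs_mul_dstar_map (h0 : ∀ x, T 0 x = x)
    (hadd : ∀ (r s : ℝ) (x : Y), T (r + s) x = T r (T s x))
    (horb : ∀ (x : Y) (r₁ r₂ : ℝ), dist (T r₁ x) (T r₂ x) ≤ |r₁ - r₂|) (s : ℝ) (x y : Y) :
    dstar T x y ≤ exp |s| * dstar T (T s x) (T s y) := by
  simpa [← hadd, h0] using dstar_map_le_exp_abs_mul hadd horb (-s) (T s x) (T s y)

end Flow

theorem dstar_pseudometric_and_biLipschitz {Y : Type*} [PseudoMetricSpace Y]
    (T : ℝ → Y → Y)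
    (h0 : ∀ x, T 0 x = x)
    (hadd : ∀ (r s : ℝ) (x : Y), T (r + s) x = T r (T s x))
    (horb : ∀ (x : Y) (r₁ r₂ : ℝ), dist (T r₁ x) (T r₂ x) ≤ |r₁ - r₂|) :
    (∀ x y : Y,
      Integrable (fun r : ℝ => dist (T r x) (T r y) * (Real.exp (-|r|) / 2))) ∧
    (∀ x y : Y, dstar T x y = dstar T y x) ∧
    (∀ x y z : Y, dstar T x z ≤ dstar T x y + dstar T y z) ∧
    (∀ x : Y, dstar T x x = 0) ∧
    (∀ x y : Y, dstar T x y ≤ dist x y + 2 ∧ dist x y - 2 ≤ dstar T x y) ∧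
    (∀ (r : ℝ) (x y : Y),
      dstar T (T r x) (T r y) ≤ Real.exp |r| * dstar T x y ∧
      dstar T x y ≤ Real.exp |r| * dstar T (T r x) (T r y)) := by
  refine ⟨integrable_dist_flow_mul_exp_neg_abs horb, dstar_comm, dstar_triangle horb,
    dstar_self, fun x y => ?_, fun r x y => ⟨dstar_map_le_exp_abs_mul hadd horb r x y,
      dstar_le_exp_abs_mul_dstar_map h0 hadd horb r x y⟩⟩
  obtain ⟨hlower, hupper⟩ := abs_le.mp (abs_dstar_sub_dist_le h0 horb x y)
  exact ⟨by linarith, by linarith⟩
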